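/- The 3-dimensional Lie algebra d₂(1:1) (with [w₁,w₃] = w₁ + w₂, [w₂,w₃] = w₂) contracts to the Lie algebra d₂ (with [w₁,w₃] = w₁, [w₂,w₃] = w₂): there exists a family g_t of automorphisms of ℂ³, defined for t ≠ 0, such that lim_{t→0} g_t*(d₂(1:1)) is isomorphic to d₂, and d₂(1:1) is not isomorphic to d₂. -/

import Mathlib

/- STATEMENT 12: The 3-dimensional Lie algebra `d₂(1:1)` (with `[w₁,w₃] = w₁ + w₂`,
`[w₂,w₃] = w₂`) contracts to `d₂` (with `[w₁,w₃] = w₁`, `[w₂,w₃] = w₂`): there is a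
family `g_t` of automorphisms of `ℂ³` (used for `t ≠ 0`) such that
`lim_{t→0} g_t*(d₂(1:1))` exists and is isomorphic to `d₂`, and `d₂(1:1)` is not
isomorphic to `d₂`.  Here `g_t*(d)(x,y) = g_t⁻¹ [g_t x, g_t y]`. -/

open Filter Topology

/-- The bracket of `d₂(1:1)`: `[w₁,w₃] = w₁ + w₂`, `[w₂,w₃] = w₂`. -/
def d211 (x y : Fin 3 → ℂ) : Fin 3 → ℂ :=
  ![x 0 * y 2 - x 2 * y 0,
    (x 0 * y 2 - x 2 * y 0) + (x 1 * y 2 - x 2 * y 1),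
    0]

/-- The bracket of `d₂`: `[w₁,w₃] = w₁`, `[w₂,w₃] = w₂`. -/
def d2diag (x y : Fin 3 → ℂ) : Fin 3 → ℂ :=
  ![x 0 * y 2 - x 2 * y 0, x 1 * y 2 - x 2 * y 1, 0]

/-- The contraction family: `diag(1, t⁻¹, 1)` for `t ≠ 0`, identity at `t = 0`. -/
noncomputable def gmap (t : ℂ) : (Fin 3 → ℂ) ≃ₗ[ℂ] (Fin 3 → ℂ) :=
  if h : t = 0 then LinearEquiv.refl ℂ _ else
  { toFun := fun x => ![x 0, t⁻¹ * x 1, x 2]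
    invFun := fun x => ![x 0, t * x 1, x 2]
    map_add' := by
      intro x y; funext i; fin_cases i <;>
        simp [Matrix.cons_val_zero, Matrix.cons_val_one] <;> ring
    map_smul' := by
      intro c x; funext i; fin_cases i <;>
        simp [Matrix.cons_val_zero, Matrix.cons_val_one] <;> ring
    left_inv := by
      intro x; funext i; fin_cases i <;>
        simp [Matrix.cons_val_zero, Matrix.cons_val_one] <;>
        field_simp
    right_inv := by
      intro x; funext i; fin_cases i <;>
        simp [Matrix.cons_val_zero, Matrix.cons_val_one] <;>
        field_simp }

lemma gmap_ne (t : ℂ) (ht : t ≠ 0) (x : Fin 3 → ℂ) :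
    gmap t x = ![x 0, t⁻¹ * x 1, x 2] := by
  simp [gmap, ht]

lemma gmap_symm_ne (t : ℂ) (ht : t ≠ 0) (x : Fin 3 → ℂ) :
    (gmap t).symm x = ![x 0, t * x 1, x 2] := by
  simp [gmap, ht]

/-- key identity in `d2diag`: `ad_x ∘ ad_x = -(x 2) • ad_x`. -/
lemma d2diag_sq (x y : Fin 3 → ℂ) :
    d2diag x (d2diag x y) = (-(x 2)) • d2diag x y := by
  funext i
  fin_cases i <;> simp [d2diag] <;> ring

theorem d211_contracts_to_d2 :
    (∃ g : ℂ → ((Fin 3 → ℂ) ≃ₗ[ℂ] (Fin 3 → ℂ)),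
      ∃ L : (Fin 3 → ℂ) → (Fin 3 → ℂ) → (Fin 3 → ℂ),
        (∀ x y, Tendsto (fun t : ℂ => (g t).symm (d211 (g t x) (g t y)))
            (𝓝[≠] (0 : ℂ)) (𝓝 (L x y)))
        ∧ ∃ h : (Fin 3 → ℂ) ≃ₗ[ℂ] (Fin 3 → ℂ),
            ∀ x y, h (L x y) = d2diag (h x) (h y))
    ∧ ¬ ∃ g : (Fin 3 → ℂ) ≃ₗ[ℂ] (Fin 3 → ℂ),
        ∀ x y, g (d211 x y) = d2diag (g x) (g y) := by
  constructor
  · refine ⟨gmap, d2diag, ?_, LinearEquiv.refl ℂ _, fun x y => rfl⟩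
    intro x y
    set a : ℂ := x 0 * y 2 - x 2 * y 0 with ha
    set b : ℂ := x 1 * y 2 - x 2 * y 1 with hb
    have hE : ∀ t : ℂ, t ≠ 0 →
        (gmap t).symm (d211 (gmap t x) (gmap t y)) = ![a, t * a + b, 0] := by
      intro t ht
      rw [gmap_ne t ht x, gmap_ne t ht y, gmap_symm_ne t ht]
      funext i
      fin_cases i <;> simp [d211] <;> field_simp <;> ring
    have hF : Tendsto (fun t : ℂ => (![a, t * a + b, 0] : Fin 3 → ℂ))
        (𝓝 (0 : ℂ)) (𝓝 (d2diag x y)) := by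
      rw [tendsto_pi_nhds]
      intro i
      fin_cases i
      · simpa [d2diag, ha] using (tendsto_const_nhds :
          Tendsto (fun _ : ℂ => a) (𝓝 0) (𝓝 a))
      · have : Tendsto (fun t : ℂ => t * a + b) (𝓝 0) (𝓝 (0 * a + b)) := by
          exact ((continuous_id.mul continuous_const).add continuous_const).tendsto 0
        simpa [d2diag] using this
      · simpa [d2diag] using (tendsto_const_nhds :
          Tendsto (fun _ : ℂ => (0 : ℂ)) (𝓝 0) (𝓝 0))
    refine Tendsto.congr' ?_ (hF.mono_left nhdsWithin_le_nhds)
    filter_upwards [self_mem_nhdsWithin] with t ht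
    exact (hE t ht).symm
  · rintro ⟨g, hg⟩
    set x : Fin 3 → ℂ := ![0, 0, 1] with hx
    set y : Fin 3 → ℂ := ![1, 0, 0] with hy
    have h1 : d211 x y = ![-1, -1, 0] := by
      funext i; fin_cases i <;> simp [d211, hx, hy]
    have h2 : d211 x (d211 x y) = ![1, 2, 0] := by
      rw [h1]
      funext i; fin_cases i <;> simp [d211, hx] <;> norm_num
    have key : g (d211 x (d211 x y)) = g ((-(g x 2)) • d211 x y) := by
      rw [hg, hg, d2diag_sq, map_smul, hg]
    have key2 : d211 x (d211 x y) = (-(g x 2)) • d211 x y := g.injective key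
    rw [h2, h1] at key2
    have e0 := congrFun key2 0
    have e1 := congrFun key2 1
    simp [Pi.smul_apply] at e0 e1
    rw [← e0] at e1
    norm_num at e1
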